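/- arXiv:1405.4641 — 3 statements merged into one kernel-verified Lean document; each statement's English description precedes it below -/
import Mathlib

section
/- Let V be a real inner product space with inner product ⟪·,·⟫, let a : V × V → ℝ be a symmetric bilinear form, and let λ ∈ ℝ and u ∈ V satisfy a(u, v) = λ·⟪u, v⟫ for all v ∈ V. Then for every w ∈ V with w ≠ 0, a(w, w)/⟪w, w⟫ − λ = a(w − u, w − u)/⟪w, w⟫ − λ·⟪w − u, w − u⟫/⟪w, w⟫. -/
/-!
Shifting the form by the eigenvalue, `b := a - λ ⟪·,·⟫` is symmetric and the eigenvector `u` lies in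
its radical, so `b (w - u) (w - u) = b w w`; dividing by `⟪w, w⟫` gives the identity.
-/

theorem LinearMap.apply_sub_sub_eq_of_apply_eq_zero {R M P : Type*} [CommRing R]
    [AddCommGroup M] [Module R M] [AddCommGroup P] [Module R P] (b : M →ₗ[R] M →ₗ[R] P)
    {u : M} (hleft : ∀ v, b u v = 0) (hright : ∀ v, b v u = 0) (w : M) :
    b (w - u) (w - u) = b w w := by
  simp [hleft, hright]

theorem apply_sub_sub_sub_inner_eq_of_eigen {V : Type*} [NormedAddCommGroup V]
    [InnerProductSpace ℝ V] (a : V →ₗ[ℝ] V →ₗ[ℝ] ℝ) (hsymm : ∀ v v' : V, a v v' = a v' v)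
    {lam : ℝ} {u : V} (heig : ∀ v : V, a u v = lam * (inner ℝ u v : ℝ)) (w : V) :
    a (w - u) (w - u) - lam * (inner ℝ (w - u) (w - u) : ℝ) = a w w - lam * (inner ℝ w w : ℝ) := by
  have hleft (v : V) : (a - lam • innerₗ V) u v = 0 := by
    simp [heig]
  have hright (v : V) : (a - lam • innerₗ V) v u = 0 := by
    simp [hsymm v u, heig, real_inner_comm]
  simpa only [LinearMap.sub_apply, LinearMap.smul_apply, innerₗ_apply_apply, smul_eq_mul] using
    (a - lam • innerₗ V).apply_sub_sub_eq_of_apply_eq_zero hleft hright w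

/-- Babuška–Osborn identity (Lemma 2.2): for a symmetric bilinear form `a` on a real
inner product space `V` and an eigenpair `(λ, u)` satisfying `a u v = λ ⟪u, v⟫` for all `v`,
every nonzero `w` satisfies
`a w w / ⟪w, w⟫ − λ = a (w−u) (w−u) / ⟪w, w⟫ − λ ⟪w−u, w−u⟫ / ⟪w, w⟫`. -/
theorem babuska_osborn_identity
    {V : Type*} [NormedAddCommGroup V] [InnerProductSpace ℝ V]
    (a : V →ₗ[ℝ] V →ₗ[ℝ] ℝ)
    (hsymm : ∀ v v' : V, a v v' = a v' v)
    (lam : ℝ) (u : V)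
    (heig : ∀ v : V, a u v = lam * (inner ℝ u v : ℝ))
    (w : V) (hw : w ≠ 0) :
    a w w / (inner ℝ w w : ℝ) - lam
      = a (w - u) (w - u) / (inner ℝ w w : ℝ)
        - lam * (inner ℝ (w - u) (w - u) : ℝ) / (inner ℝ w w : ℝ) := by
  have hww : (inner ℝ w w : ℝ) ≠ 0 := inner_self_ne_zero.mpr hw
  have hshift := apply_sub_sub_sub_inner_eq_of_eigen a hsymm heig w
  rw [← sub_div, hshift, sub_div, mul_div_cancel_right₀ lam hww]
end

section
/- Let V and W be real inner product spaces, let g : V → W be a linear map, let b : V × V → ℝ be a symmetric bilinear form, and define the bilinear form a on V by a(v, v') = ⟪g v, g v'⟫_W + b(v, v'). Let λ ∈ ℝ and u ∈ V satisfy a(u, v) = λ·⟪u, v⟫ for all v ∈ V. Let w ∈ V with w ≠ 0 and let r ∈ W be arbitrary (the recovered gradient), and define the corrected eigenvalue approximation λ' = a(w, w)/⟪w, w⟫ − ‖g w − r‖²_W/⟪w, w⟫. Then λ' − λ = ( ‖r − g u‖²_W + 2·⟪r − g u, g w − r⟫_W + b(w − u, w − u) − λ·⟪w − u, w − u⟫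 ) / ⟪w, w⟫. -/
/-!
Write `λ' - λ` over the common denominator `⟪w, w⟫`. Because `u` is an eigenvector of the
symmetric form `a`, the defect `a v v - λ ⟪v, v⟫` does not change when `u` is subtracted from `v`,
so the numerator is `a (w - u) (w - u) - λ ⟪w - u, w - u⟫ - ‖g w - r‖²`. Splitting
`g (w - u) = (r - g u) + (g w - r)` and expanding the square gives the claim.
-/

open scoped RealInnerProductSpace

section EigenDefect

variable {V : Type*} [NormedAddCommGroup V] [InnerProductSpace ℝ V]

def eigenDefect (B : V →ₗ[ℝ] V →ₗ[ℝ] ℝ) (lam : ℝ) (v : V) : ℝ :=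
  B v v - lam * ⟪v, v⟫

theorem eigenDefect_sub_eigenvector (B : V →ₗ[ℝ] V →ₗ[ℝ] ℝ) (hB : ∀ v v', B v v' = B v' v)
    {lam : ℝ} {u : V} (heig : ∀ v, B u v = lam * ⟪u, v⟫) (w : V) :
    eigenDefect B lam (w - u) = eigenDefect B lam w := by
  simp only [eigenDefect, map_sub, LinearMap.sub_apply, inner_sub_left, inner_sub_right]
  linear_combination -hB w u - 2 * heig w + heig u + lam * real_inner_comm u w

end EigenDefect

/-- Exact decomposition of the recovery-enhanced eigenvalue error (proof of Theorem 3.5):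
with `a v v' = ⟪g v, g v'⟫ + b v v'`, eigenpair `(λ, u)` of `a`, `w ≠ 0`, recovered gradient
`r`, and `λ' = a w w / ⟪w, w⟫ − ‖g w − r‖² / ⟪w, w⟫`, one has
`λ' − λ = (‖r − g u‖² + 2⟪r − g u, g w − r⟫ + b (w−u) (w−u) − λ ⟪w−u, w−u⟫) / ⟪w, w⟫`. -/
theorem recovery_enhanced_eigenvalue_identity
    {V W : Type*} [NormedAddCommGroup V] [InnerProductSpace ℝ V]
    [NormedAddCommGroup W] [InnerProductSpace ℝ W]
    (g : V →ₗ[ℝ] W)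
    (b : V →ₗ[ℝ] V →ₗ[ℝ] ℝ)
    (hbsymm : ∀ v v' : V, b v v' = b v' v)
    (a : V → V → ℝ)
    (ha : ∀ v v' : V, a v v' = (inner ℝ (g v) (g v') : ℝ) + b v v')
    (lam : ℝ) (u : V)
    (heig : ∀ v : V, a u v = lam * (inner ℝ u v : ℝ))
    (w : V) (hw : w ≠ 0) (r : W)
    (lam' : ℝ)
    (hlam' : lam' = a w w / (inner ℝ w w : ℝ) - ‖g w - r‖ ^ 2 / (inner ℝ w w : ℝ)) :
    lam' - lam
      = (‖r - g u‖ ^ 2 + 2 * (inner ℝ (r - g u) (g w - r) : ℝ)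
          + b (w - u) (w - u) - lam * (inner ℝ (w - u) (w - u) : ℝ))
        / (inner ℝ w w : ℝ) := by
  set B : V →ₗ[ℝ] V →ₗ[ℝ] ℝ := (innerₗ W).compl₁₂ g g + b
  have hB : ∀ v v', B v v' = (inner ℝ (g v) (g v') : ℝ) + b v v' := fun _ _ => rfl
  have hBsymm : ∀ v v', B v v' = B v' v := fun v v' => by
    rw [hB, hB, real_inner_comm, hbsymm]
  have hBeig : ∀ v, B u v = lam * ⟪u, v⟫ := fun v => by rw [hB, ← ha, heig]
  have hshift := eigenDefect_sub_eigenvector B hBsymm hBeig w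
  have hsplit : ⟪g (w - u), g (w - u)⟫
      = ‖r - g u‖ ^ 2 + 2 * ⟪r - g u, g w - r⟫ + ‖g w - r‖ ^ 2 := by
    rw [real_inner_self_eq_norm_sq, ← norm_add_sq_real, sub_add_sub_cancel', map_sub]
  simp only [eigenDefect, hB] at hshift
  have hww : (inner ℝ w w : ℝ) ≠ 0 := inner_self_ne_zero.mpr hw
  rw [hlam', ha, ← sub_div, eq_div_iff hww, sub_mul, div_mul_cancel₀ _ hww]
  linear_combination hsplit - hshift
end

section
/- Let V and W be real inner product spaces, let g : V → W be a linear map, let b : V × V → ℝ be a symmetric bilinear form, and define the bilinear form a on V by a(v, v') = ⟪g v, g v'⟫_W + b(v, v'). Let λ ∈ ℝ and u ∈ V satisfy a(u, v) = λ·⟪u, v⟫ for all v ∈ V. Let w ∈ V, r ∈ W, and define λ' = a(w, w)/⟪w, w⟫ − ‖g w − r‖²_W/⟪w, w⟫. Suppose there are constants ε₁, ε₂, δ, γ, m > 0 such that ‖r − g u‖_W ≤ ε₁, ‖g w − r‖_W ≤ ε₂, ‖w − u‖ ≤ δ, ⟪w, w⟫ ≥ m, and |b(v, v)| ≤ γ·⟪v,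 v⟫ for all v ∈ V. Then |λ' − λ| ≤ (ε₁² + 2·ε₁·ε₂ + (γ + |λ|)·δ²)/m. -/
/-!
Write `e = w - u`. Since `u` lies in the radical of the symmetric form `a - λ⟪·,·⟫`, the energy
defect of `w` equals that of `e`, so `(λ' - λ)⟪w, w⟫ = (‖g e‖² - ‖g w - r‖²) + b(e, e) - λ‖e‖²`.
Splitting `g e = (g w - r) + (r - g u)` makes the first bracket `2⟪g w - r, r - g u⟫ + ‖r - g u‖²`,
which is `O(ε₁ ε₂ + ε₁²)`; the remaining terms are `O(δ²)`.
-/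

open RealInnerProductSpace

theorem LinearMap.apply_sub_apply_sub_eq_of_forall_apply_eq_zero {R M : Type*} [CommRing R]
    [AddCommGroup M] [Module R M] (C : M →ₗ[R] M →ₗ[R] R) (hC : ∀ x y, C x y = C y x)
    {u : M} (hu : ∀ v, C u v = 0) (w : M) : C (w - u) (w - u) = C w w := by
  have hu' : ∀ v, C v u = 0 := fun v => (hC v u).trans (hu v)
  simp only [map_sub, LinearMap.sub_apply, hu, hu', sub_zero]

section Eigenpair

variable {V W : Type*} [NormedAddCommGroup V] [InnerProductSpace ℝ V]
  [NormedAddCommGroup W] [InnerProductSpace ℝ W]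

theorem inner_map_self_add_sub_eq_of_eigenpair (g : V →ₗ[ℝ] W) (b : V →ₗ[ℝ] V →ₗ[ℝ] ℝ)
    (hb : ∀ x y, b x y = b y x) {lam : ℝ} {u : V}
    (heig : ∀ v, ⟪g u, g v⟫ + b u v = lam * ⟪u, v⟫) (w : V) :
    ⟪g w, g w⟫ + b w w - lam * ⟪w, w⟫
      = ‖g w - g u‖ ^ 2 + b (w - u) (w - u) - lam * ‖w - u‖ ^ 2 := by
  let C : V →ₗ[ℝ] V →ₗ[ℝ] ℝ := (innerₗ W).compl₁₂ g g + b - lam • innerₗ V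
  have hC : ∀ x y, C x y = ⟪g x, g y⟫ + b x y - lam * ⟪x, y⟫ := fun x y => by simp [C]
  have hradical := C.apply_sub_apply_sub_eq_of_forall_apply_eq_zero
    (fun x y => by simp only [hC, hb x y, real_inner_comm])
    (fun v => by rw [hC, heig, sub_self]) w
  rw [hC, hC, map_sub, real_inner_self_eq_norm_sq, real_inner_self_eq_norm_sq] at hradical
  exact hradical.symm

end Eigenpair

theorem abs_norm_sub_sq_sub_norm_sub_sq_le {E : Type*} [NormedAddCommGroup E]
    [InnerProductSpace ℝ E] (x y z : E) :
    |‖x - z‖ ^ 2 - ‖x - y‖ ^ 2| ≤ ‖y - z‖ ^ 2 + 2 * ‖x - y‖ * ‖y - z‖ := by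
  have hsplit : ‖x - z‖ ^ 2 - ‖x - y‖ ^ 2 = 2 * ⟪x - y, y - z⟫ + ‖y - z‖ ^ 2 := by
    rw [← sub_add_sub_cancel x y z, norm_add_sq_real]
    ring
  have hcs := abs_real_inner_le_norm (x - y) (y - z)
  rw [hsplit]
  calc |2 * ⟪x - y, y - z⟫ + ‖y - z‖ ^ 2| ≤ 2 * |⟪x - y, y - z⟫| + ‖y - z‖ ^ 2 := by
        refine (abs_add_le _ _).trans ?_
        rw [abs_mul, abs_two, abs_of_nonneg (sq_nonneg ‖y - z‖)]
    _ ≤ ‖y - z‖ ^ 2 + 2 * ‖x - y‖ * ‖y - z‖ := by linarith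

theorem abs_le_div_of_abs_mul_le {x s N m : ℝ} (hm : 0 < m) (hs : m ≤ s) (h : |x * s| ≤ N) :
    |x| ≤ N / m := by
  rw [le_div_iff₀ hm]
  calc |x| * m ≤ |x| * s := by gcongr
    _ = |x * s| := by rw [abs_mul, abs_of_pos (hm.trans_le hs)]
    _ ≤ N := h

theorem recovery_enhanced_eigenvalue_bound_general
    {V W : Type*} [NormedAddCommGroup V] [InnerProductSpace ℝ V]
    [NormedAddCommGroup W] [InnerProductSpace ℝ W]
    (g : V →ₗ[ℝ] W)
    (b : V →ₗ[ℝ] V →ₗ[ℝ] ℝ)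
    (hbsymm : ∀ v v' : V, b v v' = b v' v)
    (a : V → V → ℝ)
    (ha : ∀ v v' : V, a v v' = (inner ℝ (g v) (g v') : ℝ) + b v v')
    (lam : ℝ) (u : V)
    (heig : ∀ v : V, a u v = lam * (inner ℝ u v : ℝ))
    (w : V) (r : W)
    (lam' : ℝ)
    (hlam' : lam' = a w w / (inner ℝ w w : ℝ) - ‖g w - r‖ ^ 2 / (inner ℝ w w : ℝ))
    (ε₁ ε₂ δ γ m : ℝ)
    (hm : 0 < m)
    (h1 : ‖r - g u‖ ≤ ε₁)
    (h2 : ‖g w - r‖ ≤ ε₂)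
    (h3 : ‖w - u‖ ≤ δ)
    (h4 : m ≤ (inner ℝ w w : ℝ))
    (h5 : ∀ v : V, |b v v| ≤ γ * (inner ℝ v v : ℝ)) :
    |lam' - lam| ≤ (ε₁ ^ 2 + 2 * ε₁ * ε₂ + (γ + |lam|) * δ ^ 2) / m := by
  have hww : 0 < ⟪w, w⟫ := hm.trans_le h4
  have hγ : 0 ≤ γ := nonneg_of_mul_nonneg_left ((abs_nonneg _).trans (h5 w)) hww
  have hdefect := inner_map_self_add_sub_eq_of_eigenpair g b hbsymm
    (fun v => (ha u v).symm.trans (heig v)) w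
  have hrecov : |‖g w - g u‖ ^ 2 - ‖g w - r‖ ^ 2| ≤ ε₁ ^ 2 + 2 * ε₁ * ε₂ := by
    have := abs_norm_sub_sq_sub_norm_sub_sq_le (g w) r (g u)
    nlinarith [norm_nonneg (r - g u), norm_nonneg (g w - r)]
  have he : ‖w - u‖ ^ 2 ≤ δ ^ 2 := pow_le_pow_left₀ (norm_nonneg _) h3 2
  have hb : |b (w - u) (w - u)| ≤ γ * δ ^ 2 :=
    (h5 _).trans (by rw [real_inner_self_eq_norm_sq]; gcongr)
  have hlam : |lam * ‖w - u‖ ^ 2| ≤ |lam| * δ ^ 2 := by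
    rw [abs_mul, abs_of_nonneg (sq_nonneg ‖w - u‖)]; gcongr
  refine abs_le_div_of_abs_mul_le hm h4 ?_
  have herr : (lam' - lam) * ⟪w, w⟫
      = (‖g w - g u‖ ^ 2 - ‖g w - r‖ ^ 2) + b (w - u) (w - u) - lam * ‖w - u‖ ^ 2 := by
    rw [hlam', sub_mul, sub_mul, div_mul_cancel₀ _ hww.ne', div_mul_cancel₀ _ hww.ne', ha]
    linarith
  rw [herr]
  refine (abs_sub _ _).trans ?_
  linarith [abs_add_le (‖g w - g u‖ ^ 2 - ‖g w - r‖ ^ 2) (b (w - u) (w - u))]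

/-- Quantitative bound behind Theorem 3.5: with `a v v' = ⟪g v, g v'⟫ + b v v'`, an eigenpair
`(λ, u)` of `a`, `λ' = a w w / ⟪w, w⟫ − ‖g w − r‖² / ⟪w, w⟫`, and bounds
`‖r − g u‖ ≤ ε₁`, `‖g w − r‖ ≤ ε₂`, `‖w − u‖ ≤ δ`, `⟪w, w⟫ ≥ m`, `|b v v| ≤ γ ⟪v, v⟫`,
one has `|λ' − λ| ≤ (ε₁² + 2 ε₁ ε₂ + (γ + |λ|) δ²) / m`. -/
theorem recovery_enhanced_eigenvalue_bound
    {V W : Type*} [NormedAddCommGroup V] [InnerProductSpace ℝ V]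
    [NormedAddCommGroup W] [InnerProductSpace ℝ W]
    (g : V →ₗ[ℝ] W)
    (b : V →ₗ[ℝ] V →ₗ[ℝ] ℝ)
    (hbsymm : ∀ v v' : V, b v v' = b v' v)
    (a : V → V → ℝ)
    (ha : ∀ v v' : V, a v v' = (inner ℝ (g v) (g v') : ℝ) + b v v')
    (lam : ℝ) (u : V)
    (heig : ∀ v : V, a u v = lam * (inner ℝ u v : ℝ))
    (w : V) (r : W)
    (lam' : ℝ)
    (hlam' : lam' = a w w / (inner ℝ w w : ℝ) - ‖g w - r‖ ^ 2 / (inner ℝ w w : ℝ))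
    (ε₁ ε₂ δ γ m : ℝ)
    (hε₁ : 0 < ε₁) (hε₂ : 0 < ε₂) (hδ : 0 < δ) (hγ : 0 < γ) (hm : 0 < m)
    (h1 : ‖r - g u‖ ≤ ε₁)
    (h2 : ‖g w - r‖ ≤ ε₂)
    (h3 : ‖w - u‖ ≤ δ)
    (h4 : m ≤ (inner ℝ w w : ℝ))
    (h5 : ∀ v : V, |b v v| ≤ γ * (inner ℝ v v : ℝ)) :
    |lam' - lam| ≤ (ε₁ ^ 2 + 2 * ε₁ * ε₂ + (γ + |lam|) * δ ^ 2) / m :=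
  recovery_enhanced_eigenvalue_bound_general g b hbsymm a ha lam u heig w r lam' hlam' ε₁ ε₂ δ γ m
    hm h1 h2 h3 h4 h5
end
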